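/- For every i ≥ 1, the unique subset S of P^(i) with P^(i) = S ∪ P_S and S ∩ P_S = ∅ (where P_S = {p_n : n ∈ S}) is precisely the alternating-sum set 𝔓^(i). -/
import Mathlib


/-- `nthPrime n` is the `n`-th prime number, 1-indexed: `nthPrime 1 = 2`, `nthPrime 2 = 3`, ... -/
noncomputable def nthPrime (n : ℕ) : ℕ := Nat.nth Nat.Prime (n - 1)

/-- For a set `S` of positive integers, `indexedSet S = {p_n : n ∈ S}`. -/
def indexedSet (S : Set ℕ) : Set ℕ := {m | ∃ n ∈ S, m = nthPrime n}

/-- The higher-order prime sets: `P 1` is the set of all primes, and `P (k+1) = indexedSet (P k)`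
for `k ≥ 1`.  (`P 0` is a junk value.) -/
def P : ℕ → Set ℕ
  | 0 => ∅
  | 1 => {p | p.Prime}
  | (k + 2) => indexedSet (P (k + 1))

/-- The alternating-sum set `𝔓^(i) = ⋃_{j≥0} (P^(i+2j) \ P^(i+2j+1))`. -/
def altSet (i : ℕ) : Set ℕ := ⋃ j : ℕ, (P (i + 2 * j) \ P (i + 2 * j + 1))

lemma nthPrime_prime (n : ℕ) : (nthPrime n).Prime := Nat.prime_nth_prime _

lemma add_two_le_nth (k : ℕ) : k + 2 ≤ Nat.nth Nat.Prime k := by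
  induction k with
  | zero => exact (Nat.prime_nth_prime 0).two_le
  | succ k ih =>
    have h : Nat.nth Nat.Prime k < Nat.nth Nat.Prime (k + 1) :=
      (Nat.nth_lt_nth Nat.infinite_setOf_prime).2 (Nat.lt_succ_self k)
    omega

lemma lt_nthPrime {n : ℕ} (hn : 1 ≤ n) : n < nthPrime n := by
  have := add_two_le_nth (n - 1)
  unfold nthPrime
  omega

lemma nthPrime_inj {m n : ℕ} (hm : 1 ≤ m) (hn : 1 ≤ n) (h : nthPrime m = nthPrime n) :
    m = n := by
  have := Nat.nth_injective Nat.infinite_setOf_prime h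
  omega

lemma le_of_mem_P : ∀ k, ∀ m ∈ P k, k + 1 ≤ m := by
  intro k
  induction k with
  | zero => intro m hm; simp [P] at hm
  | succ k ih =>
    intro m hm
    match k, ih, hm with
    | 0, _, hm => exact hm.two_le
    | (j + 1), ih, hm =>
      obtain ⟨n, hn, rfl⟩ := hm
      have h1 := ih n hn
      have h2 := lt_nthPrime (n := n) (by omega)
      omega

lemma one_le_of_mem_P {k m : ℕ} (h : m ∈ P k) : 1 ≤ m := by
  have := le_of_mem_P k m h; omega

lemma indexedSet_P {k : ℕ} (hk : 1 ≤ k) : indexedSet (P k) = P (k + 1) := by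
  match k, hk with
  | (j + 1), _ => rfl

lemma indexedSet_mono {A B : Set ℕ} (h : A ⊆ B) : indexedSet A ⊆ indexedSet B := by
  rintro m ⟨n, hn, rfl⟩; exact ⟨n, h hn, rfl⟩

lemma P_succ_subset : ∀ k, 1 ≤ k → P (k + 1) ⊆ P k := by
  intro k
  induction k with
  | zero => omega
  | succ k ih =>
    intro _
    match k, ih with
    | 0, _ => rintro m ⟨n, hn, rfl⟩; exact nthPrime_prime n
    | (j + 1), ih =>
      show indexedSet (P (j + 2)) ⊆ indexedSet (P (j + 1))
      exact indexedSet_mono (ih (by omega))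

lemma P_subset : ∀ b a, 1 ≤ a → a ≤ b → P b ⊆ P a := by
  intro b
  induction b with
  | zero => intro a ha hab; omega
  | succ b ih =>
    intro a ha hab
    rcases eq_or_lt_of_le hab with h | h
    · rw [h]
    · exact (P_succ_subset b (by omega)).trans (ih a ha (by omega))

lemma indexedSet_diff {A B : Set ℕ} (hA : ∀ n ∈ A, 1 ≤ n) (hB : ∀ n ∈ B, 1 ≤ n) :
    indexedSet (A \ B) = indexedSet A \ indexedSet B := by
  ext m
  constructor
  · rintro ⟨n, ⟨hnA, hnB⟩, rfl⟩
    refine ⟨⟨n, hnA, rfl⟩, ?_⟩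
    rintro ⟨n', hn', he⟩
    have h := nthPrime_inj (hA n hnA) (hB n' hn') he
    exact hnB (by rw [h]; exact hn')
  · rintro ⟨⟨n, hnA, rfl⟩, hm⟩
    exact ⟨n, ⟨hnA, fun hnB => hm ⟨n, hnB, rfl⟩⟩, rfl⟩

lemma indexedSet_D {k : ℕ} (hk : 1 ≤ k) :
    indexedSet (P k \ P (k + 1)) = P (k + 1) \ P (k + 2) := by
  rw [indexedSet_diff (fun n hn => one_le_of_mem_P hn) (fun n hn => one_le_of_mem_P hn),
    indexedSet_P hk, indexedSet_P (by omega : 1 ≤ k + 1)]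

lemma D_disjoint {a b m : ℕ} (ha : 1 ≤ a) (hab : a < b)
    (h1 : m ∈ P a \ P (a + 1)) (h2 : m ∈ P b \ P (b + 1)) : False :=
  h1.2 (P_subset b (a + 1) (by omega) hab h2.1)

lemma D_congr {a b m : ℕ} (h : a = b) (hm : m ∈ P a \ P (a + 1)) :
    m ∈ P b \ P (b + 1) := h ▸ hm

lemma P_eq_iUnion_D {i : ℕ} (hi : 1 ≤ i) :
    P i = ⋃ k : ℕ, (P (i + k) \ P (i + k + 1)) := by
  classical
  ext m
  simp only [Set.mem_iUnion]
  constructor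
  · intro hm
    have hex : ∃ k, m ∉ P (i + k + 1) := by
      refine ⟨m, fun h => ?_⟩
      have := le_of_mem_P _ m h
      omega
    refine ⟨Nat.find hex, ?_, Nat.find_spec hex⟩
    rcases Nat.eq_zero_or_pos (Nat.find hex) with h0 | h0
    · rw [h0]; simpa using hm
    · have h1 := Nat.find_min hex (Nat.sub_lt h0 one_pos)
      have h2 : m ∈ P (i + (Nat.find hex - 1) + 1) := not_not.mp h1
      have h3 : i + Nat.find hex = i + (Nat.find hex - 1) + 1 := by omega
      rw [h3]; exact h2
  · rintro ⟨k, hk⟩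
    exact P_subset (i + k) i hi (by omega) hk.1

lemma altSet_subset_P {i : ℕ} (hi : 1 ≤ i) : altSet i ⊆ P i := by
  rintro m hm
  simp only [altSet, Set.mem_iUnion] at hm
  obtain ⟨j, hj⟩ := hm
  exact P_subset _ _ hi (by omega) hj.1

lemma indexedSet_iUnion (A : ℕ → Set ℕ) :
    indexedSet (⋃ j, A j) = ⋃ j, indexedSet (A j) := by
  ext m
  simp only [indexedSet, Set.mem_iUnion, Set.mem_setOf_eq]
  constructor
  · rintro ⟨n, ⟨j, hj⟩, rfl⟩; exact ⟨j, n, hj, rfl⟩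
  · rintro ⟨j, n, hj, rfl⟩; exact ⟨n, ⟨j, hj⟩, rfl⟩

lemma indexedSet_altSet {i : ℕ} (hi : 1 ≤ i) :
    indexedSet (altSet i) = altSet (i + 1) := by
  unfold altSet
  rw [indexedSet_iUnion]
  apply Set.iUnion_congr
  intro j
  rw [indexedSet_D (by omega : 1 ≤ i + 2 * j)]
  simp only [show i + 2 * j + 1 = i + 1 + 2 * j from by omega,
    show i + 2 * j + 2 = i + 1 + 2 * j + 1 from by omega]

lemma altSet_union {i : ℕ} (hi : 1 ≤ i) : altSet i ∪ altSet (i + 1) = P i := by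
  rw [P_eq_iUnion_D hi]
  ext m
  simp only [altSet, Set.mem_union, Set.mem_iUnion]
  constructor
  · rintro (⟨j, hj⟩ | ⟨j, hj⟩)
    · exact ⟨2 * j, hj⟩
    · exact ⟨2 * j + 1, D_congr (by omega) hj⟩
  · rintro ⟨k, hk⟩
    rcases Nat.even_or_odd k with ⟨j, hj⟩ | ⟨j, hj⟩
    · exact Or.inl ⟨j, D_congr (by omega) hk⟩
    · exact Or.inr ⟨j, D_congr (by omega) hk⟩

lemma altSet_disjoint {i : ℕ} (hi : 1 ≤ i) : altSet i ∩ altSet (i + 1) = ∅ := by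
  ext m
  simp only [altSet, Set.mem_inter_iff, Set.mem_iUnion, Set.mem_empty_iff_false,
    iff_false, not_and]
  rintro ⟨j, hj⟩ ⟨j', hj'⟩
  rcases Nat.lt_trichotomy (i + 2 * j) (i + 1 + 2 * j') with h | h | h
  · exact D_disjoint (by omega) h hj hj'
  · omega
  · exact D_disjoint (by omega) h hj' hj

/-- For every `i ≥ 1`, the unique subset `S` of `P^(i)` with `P^(i) = S ∪ P_S` and
`S ∩ P_S = ∅` is precisely the alternating-sum set `𝔓^(i)`. -/
theorem unique_partition_eq_altSet (i : ℕ) (hi : 1 ≤ i) (S : Set ℕ) :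
    (S ⊆ P i ∧ P i = S ∪ indexedSet S ∧ S ∩ indexedSet S = ∅) ↔ S = altSet i := by
  have hU : P i = altSet i ∪ indexedSet (altSet i) := by
    rw [indexedSet_altSet hi, altSet_union hi]
  have hD : altSet i ∩ indexedSet (altSet i) = ∅ := by
    rw [indexedSet_altSet hi]; exact altSet_disjoint hi
  constructor
  · rintro ⟨hsub, hunion, hdisj⟩
    ext m
    induction m using Nat.strong_induction_on with
    | _ m ih =>
      by_cases hm : m ∈ P i
      · have hS : m ∈ S ↔ m ∉ indexedSet S := by
          constructor
          · intro h1 h2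
            exact Set.eq_empty_iff_forall_notMem.mp hdisj m ⟨h1, h2⟩
          · intro h1
            rcases hunion ▸ hm with h | h
            · exact h
            · exact absurd h h1
        have hA : m ∈ altSet i ↔ m ∉ indexedSet (altSet i) := by
          constructor
          · intro h1 h2
            exact Set.eq_empty_iff_forall_notMem.mp hD m ⟨h1, h2⟩
          · intro h1
            rcases hU ▸ hm with h | h
            · exact h
            · exact absurd h h1
        have hIdx : m ∈ indexedSet S ↔ m ∈ indexedSet (altSet i) := by
          constructor
          · rintro ⟨n, hn, rfl⟩
            have h1 : 1 ≤ n := one_le_of_mem_P (hsub hn)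
            exact ⟨n, (ih n (lt_nthPrime h1)).1 hn, rfl⟩
          · rintro ⟨n, hn, rfl⟩
            have h1 : 1 ≤ n := one_le_of_mem_P (altSet_subset_P hi hn)
            exact ⟨n, (ih n (lt_nthPrime h1)).2 hn, rfl⟩
        rw [hS, hA]
        exact not_congr hIdx
      · exact iff_of_false (fun h => hm (hsub h)) (fun h => hm (altSet_subset_P hi h))
  · rintro rfl
    exact ⟨altSet_subset_P hi, hU, hD⟩
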